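/- Let A = Σ_{i=1}^n ρ_i v_i v_iᵀ with ρ_i > 0 and v_i in R^3. Then for any X, Y in SO(3): ψ(AXYᵀ) = (1/2) Y Σ_{i=1}^n ρ_i (Xᵀv_i × Yᵀv_i), where ψ(M) = [(M - Mᵀ)/2]_⊗. -/
import Mathlib

open Matrix

/-- `ψ(M) = [P_a(M)]_⊗`, the vector of the anti-symmetric part of `M`. -/
noncomputable def psi (M : Matrix (Fin 3) (Fin 3) ℝ) : Fin 3 → ℝ :=
  ![(M 2 1 - M 1 2) / 2, (M 0 2 - M 2 0) / 2, (M 1 0 - M 0 1) / 2]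

lemma psi_sum {n : ℕ} (f : Fin n → Matrix (Fin 3) (Fin 3) ℝ) :
    psi (∑ i, f i) = ∑ i, psi (f i) := by
  funext k
  fin_cases k <;>
    simp [psi, Matrix.sum_apply, sub_div, Finset.sum_div, Finset.sum_sub_distrib]

lemma psi_smul (c : ℝ) (M : Matrix (Fin 3) (Fin 3) ℝ) :
    psi (c • M) = c • psi M := by
  funext k; fin_cases k <;> simp [psi] <;> ring

lemma psi_vecMulVec (u w : Fin 3 → ℝ) :
    psi (vecMulVec u w) = (1 / 2 : ℝ) • crossProduct w u := by
  funext k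
  fin_cases k <;> simp [psi, vecMulVec_apply, cross_apply] <;> ring

lemma vecMulVec_mul (u w : Fin 3 → ℝ) (M : Matrix (Fin 3) (Fin 3) ℝ) :
    vecMulVec u w * M = vecMulVec u (Mᵀ *ᵥ w) := by
  ext j k
  simp [vecMulVec_apply, mul_apply, mulVec, dotProduct, Finset.mul_sum, mul_comm,
    mul_left_comm]

lemma adjugate_of_so3 (Y : Matrix (Fin 3) (Fin 3) ℝ)
    (hY : Yᵀ * Y = 1) (hdetY : Y.det = 1) : adjugate Y = Yᵀ := by
  have h1 : adjugate Y * Y = 1 := by rw [adjugate_mul, hdetY, one_smul]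
  have h2 : Y * Yᵀ = 1 := mul_eq_one_comm.mp hY
  calc adjugate Y = adjugate Y * (Y * Yᵀ) := by rw [h2, mul_one]
    _ = (adjugate Y * Y) * Yᵀ := by rw [Matrix.mul_assoc]
    _ = Yᵀ := by rw [h1, Matrix.one_mul]

lemma cross_rot (Y : Matrix (Fin 3) (Fin 3) ℝ)
    (hY : Yᵀ * Y = 1) (hdetY : Y.det = 1) (a b : Fin 3 → ℝ) :
    Y *ᵥ (crossProduct a b) = crossProduct (Y *ᵥ a) (Y *ᵥ b) := by
  have hadj := adjugate_of_so3 Y hY hdetY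
  rw [adjugate_fin_three] at hadj
  have e : ∀ i j, (!![Y 1 1 * Y 2 2 - Y 1 2 * Y 2 1,
      -(Y 0 1 * Y 2 2) + Y 0 2 * Y 2 1,
      Y 0 1 * Y 1 2 - Y 0 2 * Y 1 1;
      -(Y 1 0 * Y 2 2) + Y 1 2 * Y 2 0,
      Y 0 0 * Y 2 2 - Y 0 2 * Y 2 0,
      -(Y 0 0 * Y 1 2) + Y 0 2 * Y 1 0;
      Y 1 0 * Y 2 1 - Y 1 1 * Y 2 0,
      -(Y 0 0 * Y 2 1) + Y 0 1 * Y 2 0,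
      Y 0 0 * Y 1 1 - Y 0 1 * Y 1 0] : Matrix (Fin 3) (Fin 3) ℝ) i j = Yᵀ i j := by
    rw [hadj]; intro i j; rfl
  have e00 := e 0 0; have e01 := e 0 1; have e02 := e 0 2
  have e10 := e 1 0; have e11 := e 1 1; have e12 := e 1 2
  have e20 := e 2 0; have e21 := e 2 1; have e22 := e 2 2
  simp [transpose_apply] at e00 e01 e02 e10 e11 e12 e20 e21 e22
  funext k
  fin_cases k <;>
    simp [cross_apply, mulVec, dotProduct, Fin.sum_univ_three] <;>
  [ linear_combination (a 2 * b 1 - a 1 * b 2) * e00 + (a 0 * b 2 - a 2 * b 0) * e10 +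
      (a 1 * b 0 - a 0 * b 1) * e20;
    linear_combination (a 2 * b 1 - a 1 * b 2) * e01 + (a 0 * b 2 - a 2 * b 0) * e11 +
      (a 1 * b 0 - a 0 * b 1) * e21;
    linear_combination (a 2 * b 1 - a 1 * b 2) * e02 + (a 0 * b 2 - a 2 * b 0) * e12 +
      (a 1 * b 0 - a 0 * b 1) * e22 ]

theorem psi_cross_sum (n : ℕ) (ρ : Fin n → ℝ) (v : Fin n → Fin 3 → ℝ)
    (hρ : ∀ i, 0 < ρ i)
    (X Y : Matrix (Fin 3) (Fin 3) ℝ)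
    (hX : Xᵀ * X = 1) (hdetX : X.det = 1)
    (hY : Yᵀ * Y = 1) (hdetY : Y.det = 1) :
    psi ((∑ i, ρ i • vecMulVec (v i) (v i)) * X * Yᵀ)
      = (1 / 2 : ℝ) • (Y *ᵥ ∑ i, ρ i • crossProduct (Xᵀ *ᵥ v i) (Yᵀ *ᵥ v i)) := by
  have hYYt : Y * Yᵀ = 1 := mul_eq_one_comm.mp hY
  have key : ∀ i : Fin n,
      psi (ρ i • vecMulVec (v i) (v i) * X * Yᵀ)
        = (1 / 2 : ℝ) • (ρ i • (Y *ᵥ crossProduct (Xᵀ *ᵥ v i) (Yᵀ *ᵥ v i))) := by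
    intro i
    rw [cross_rot Y hY hdetY]
    have hb : Y *ᵥ (Yᵀ *ᵥ v i) = v i := by
      rw [mulVec_mulVec, hYYt, one_mulVec]
    rw [hb]
    rw [Matrix.smul_mul, Matrix.smul_mul, psi_smul, Matrix.mul_assoc,
      vecMulVec_mul, psi_vecMulVec, transpose_mul, transpose_transpose,
      ← mulVec_mulVec]
    rw [smul_comm]
  calc psi ((∑ i, ρ i • vecMulVec (v i) (v i)) * X * Yᵀ)
      = psi (∑ i, ρ i • vecMulVec (v i) (v i) * X * Yᵀ) := by
        rw [Finset.sum_mul, Finset.sum_mul]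
    _ = ∑ i, psi (ρ i • vecMulVec (v i) (v i) * X * Yᵀ) := psi_sum _
    _ = ∑ i, (1 / 2 : ℝ) • (ρ i • (Y *ᵥ crossProduct (Xᵀ *ᵥ v i) (Yᵀ *ᵥ v i))) := by
        simp only [key]
    _ = (1 / 2 : ℝ) • (Y *ᵥ ∑ i, ρ i • crossProduct (Xᵀ *ᵥ v i) (Yᵀ *ᵥ v i)) := by
        rw [← Finset.smul_sum]
        congr 1
        simp only [← Matrix.mulVecLin_apply, map_sum, LinearMap.map_smul]
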